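/- arXiv:2207.04362 — 2 statements merged into one kernel-verified Lean document; each statement's English description precedes it below -/
import Mathlib

section
/- The relation ⊑₀^∞ on the (finite and infinite) firing sequences of a net, defined by σ ⊑₀^∞ ρ iff for every finite prefix σ'' of σ there exist finite firing sequences σ', ρ' with σ'' ≤ σ' ≡₀* ρ' ≤ ρ, is a preorder (reflexive and transitive). -/
open Relation

/-- A place/transition net with place type `S` and transition type `T`. -/
structure Net (S T : Type) where
  /-- arc weight from place `s` to transition `t` -/
  pre : T → S → ℕ
  /-- arc weight from transition `t` to place `s` -/
  post : T → S → ℕ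
  /-- the initial marking -/
  M0 : S → ℕ
  pre_finite : ∀ t, {s | pre t s > 0}.Finite
  pre_nonempty : ∀ t, ∃ s, pre t s > 0
  post_finite : ∀ t, {s | post t s > 0}.Finite

namespace Net

variable {S T : Type} (N : Net S T)

/-- the singleton step `{t}` is enabled at marking `M` -/
def Enabled (t : T) (M : S → ℕ) : Prop := ∀ s, N.pre t s ≤ M s

/-- the two-element multiset step `{t,u}` is enabled at marking `M` -/
def Enabled2 (t u : T) (M : S → ℕ) : Prop := ∀ s, N.pre t s + N.pre u s ≤ M s

/-- firing transition `t` leads from marking `M` to marking `M'` -/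
def Fires (t : T) (M M' : S → ℕ) : Prop :=
  N.Enabled t M ∧ M' = fun s => M s - N.pre t s + N.post t s

/-- firing the finite transition sequence `σ` leads from `M` to `M'` -/
inductive FiresList : (S → ℕ) → List T → (S → ℕ) → Prop
  | nil (M : S → ℕ) : FiresList M [] M
  | cons {M M₁ M' : S → ℕ} {t : T} {σ : List T} :
      N.Fires t M M₁ → FiresList M₁ σ M' → FiresList M (t :: σ) M'

/-- a marking is reachable -/
def Reachable (M : S → ℕ) : Prop := ∃ σ : List T, N.FiresList N.M0 σ M

/-- `σ` is a finite firing sequence of `N` -/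
def FS (σ : List T) : Prop := ∃ M, N.FiresList N.M0 σ M

/-- `σ` is a (possibly infinite) firing sequence of `N` -/
def FSInf (σ : Stream'.Seq T) : Prop := ∀ n, N.FS (σ.take n)

/-- adjacency `≡₀` on finite firing sequences -/
def Adj (σ ρ : List T) : Prop :=
  ∃ (α β : List T) (t u : T) (M : S → ℕ),
    σ = α ++ t :: u :: β ∧ ρ = α ++ u :: t :: β ∧
    N.FiresList N.M0 α M ∧ N.Enabled2 t u M ∧ N.FS σ ∧ N.FS ρ

/-- adjacency `≡₀` on possibly infinite firing sequences -/
def AdjSeq (σ ρ : Stream'.Seq T) : Prop :=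
  ∃ (α : List T) (β : Stream'.Seq T) (t u : T) (M : S → ℕ),
    σ = (Stream'.Seq.ofList (α ++ [t, u])).append β ∧
    ρ = (Stream'.Seq.ofList (α ++ [u, t])).append β ∧
    N.FiresList N.M0 α M ∧ N.Enabled2 t u M ∧ N.FSInf σ ∧ N.FSInf ρ

end Net

/-- the finite sequence `l` is a prefix of the possibly infinite sequence `s` -/
def ListPrefixSeq {T : Type} (l : List T) (s : Stream'.Seq T) : Prop :=
  s.take l.length = l

namespace Net

variable {S T : Type} (N : Net S T)

/-- the preorder `⊑₀^∞` on possibly infinite firing sequences -/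
def Sqsubseteq0 (σ ρ : Stream'.Seq T) : Prop :=
  ∀ σ'' : List T, N.FS σ'' → ListPrefixSeq σ'' σ →
    ∃ σ' ρ' : List T, N.FS σ' ∧ N.FS ρ' ∧ σ'' <+: σ' ∧
      ReflTransGen N.Adj σ' ρ' ∧ ListPrefixSeq ρ' ρ

end Net

namespace Net

variable {S T : Type} (N : Net S T)

lemma firesList_append {M M' : S → ℕ} {σ ρ : List T} :
    N.FiresList M (σ ++ ρ) M' ↔ ∃ M₁, N.FiresList M σ M₁ ∧ N.FiresList M₁ ρ M' := by
  induction σ generalizing M with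
  | nil =>
    simp only [List.nil_append]
    constructor
    · intro h; exact ⟨M, .nil M, h⟩
    · rintro ⟨M₁, h1, h2⟩; cases h1; exact h2
  | cons t σ ih =>
    constructor
    · intro h
      cases h with
      | cons hf hrest =>
        obtain ⟨M₁, h1, h2⟩ := ih.mp hrest
        exact ⟨M₁, .cons hf h1, h2⟩
    · rintro ⟨M₁, h1, h2⟩
      cases h1 with
      | cons hf h1' => exact .cons hf (ih.mpr ⟨_, h1', h2⟩)

lemma firesList_det {M M₁ M₂ : S → ℕ} {σ : List T} :
    N.FiresList M σ M₁ → N.FiresList M σ M₂ → M₁ = M₂ := by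
  intro h1 h2
  induction h1 generalizing M₂ with
  | nil => cases h2; rfl
  | cons hf _ ih =>
    cases h2 with
    | cons hf' h2' =>
      have e := hf'.2.trans hf.2.symm
      subst e
      exact ih h2'

lemma adj_fires {σ ρ : List T} {M : S → ℕ}
    (h : N.Adj σ ρ) (hσ : N.FiresList N.M0 σ M) : N.FiresList N.M0 ρ M := by
  obtain ⟨α, β, t, u, Mα, rfl, rfl, hα, hen2, -, Mρ, hρ⟩ := h
  have hσ' : N.FiresList N.M0 (α ++ ([t, u] ++ β)) M := by simpa using hσ
  have hρ' : N.FiresList N.M0 (α ++ ([u, t] ++ β)) Mρ := by simpa using hρ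
  obtain ⟨M₁, hM₁, h2⟩ := (N.firesList_append).mp hσ'
  obtain ⟨M₂, hM₂, h3⟩ := (N.firesList_append).mp h2
  obtain ⟨M₁', hM₁', h2'⟩ := (N.firesList_append).mp hρ'
  obtain ⟨M₂', hM₂', h3'⟩ := (N.firesList_append).mp h2'
  have e1 : M₁ = Mα := N.firesList_det hM₁ hα
  have e1' : M₁' = Mα := N.firesList_det hM₁' hα
  subst e1; subst e1'
  -- compute M₂ and M₂'
  have hM2eq : M₂' = M₂ := by
    cases hM₂ with
    | cons hf hrest =>
      cases hrest with
      | cons hg hnil =>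
        cases hnil
        cases hM₂' with
        | cons hf' hrest' =>
          cases hrest' with
          | cons hg' hnil' =>
            cases hnil'
            obtain ⟨-, e2⟩ := hf
            obtain ⟨-, e3⟩ := hg
            obtain ⟨-, e2'⟩ := hf'
            obtain ⟨-, e3'⟩ := hg'
            subst e2; subst e3; subst e2'; subst e3'
            funext s
            have := hen2 s
            simp only
            omega
  rw [hM2eq] at hM₂'
  have : N.FiresList N.M0 (α ++ ([u, t] ++ β)) M :=
    (N.firesList_append).mpr ⟨_, hα, (N.firesList_append).mpr ⟨M₂, hM₂', h3⟩⟩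
  simpa using this

lemma adj_symm {σ ρ : List T} (h : N.Adj σ ρ) : N.Adj ρ σ := by
  obtain ⟨α, β, t, u, Mα, h1, h2, hα, hen2, hfs1, hfs2⟩ := h
  exact ⟨α, β, u, t, Mα, h2, h1, hα, fun s => by have := hen2 s; omega, hfs2, hfs1⟩

lemma adj_append {σ ρ γ : List T} (h : N.Adj σ ρ) (hFS : N.FS (ρ ++ γ)) :
    N.FS (σ ++ γ) ∧ N.Adj (σ ++ γ) (ρ ++ γ) := by
  obtain ⟨Mend, hend⟩ := hFS
  obtain ⟨Mρ, hρ, hγ⟩ := (N.firesList_append).mp hend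
  have hσ : N.FiresList N.M0 σ Mρ := N.adj_fires (N.adj_symm h) hρ
  have hFSσ : N.FS (σ ++ γ) := ⟨Mend, (N.firesList_append).mpr ⟨Mρ, hσ, hγ⟩⟩
  refine ⟨hFSσ, ?_⟩
  obtain ⟨α, β, t, u, Mα, h1, h2, hα, hen2, -, -⟩ := h
  refine ⟨α, β ++ γ, t, u, Mα, ?_, ?_, hα, hen2, hFSσ, ⟨Mend, hend⟩⟩
  · rw [h1]; simp
  · rw [h2]; simp

lemma rtg_adj_append {σ ρ γ : List T} (h : Relation.ReflTransGen N.Adj σ ρ)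
    (hFS : N.FS (ρ ++ γ)) :
    N.FS (σ ++ γ) ∧ Relation.ReflTransGen N.Adj (σ ++ γ) (ρ ++ γ) := by
  induction h with
  | refl => exact ⟨hFS, .refl⟩
  | tail _ hadj ih =>
    obtain ⟨hb, hadj'⟩ := N.adj_append hadj hFS
    obtain ⟨hσ, hrtg⟩ := ih hb
    exact ⟨hσ, hrtg.tail hadj'⟩

end Net

theorem sqsubseteq0_preorder {S T : Type} (N : Net S T) :
    (∀ σ : Stream'.Seq T, N.FSInf σ → N.Sqsubseteq0 σ σ) ∧
    (∀ σ ρ ν : Stream'.Seq T, N.FSInf σ → N.FSInf ρ → N.FSInf ν →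
      N.Sqsubseteq0 σ ρ → N.Sqsubseteq0 ρ ν → N.Sqsubseteq0 σ ν) := by
  constructor
  · intro σ _ σ'' hFS hpre
    exact ⟨σ'', σ'', hFS, hFS, List.prefix_refl _, .refl, hpre⟩
  · intro σ ρ ν _ _ _ hσρ hρν σ'' hFS hpre
    obtain ⟨σ', ρ', hFSσ', hFSρ', hp1, hrtg1, hpρ⟩ := hσρ σ'' hFS hpre
    obtain ⟨ρ₂, ν', hFSρ₂, hFSν', hp2, hrtg2, hpν⟩ := hρν ρ' hFSρ' hpρ
    obtain ⟨γ, rfl⟩ := hp2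
    obtain ⟨hFSσ₂, hrtg1'⟩ := N.rtg_adj_append hrtg1 hFSρ₂
    exact ⟨σ' ++ γ, ν', hFSσ₂, hFSν',
      hp1.trans (List.prefix_append _ _), hrtg1'.trans hrtg2, hpν⟩
end

section
/- In a binary-conflict-free net, if σt and σρ are finite firing sequences with the transition t not occurring in ρ, then σtρ and σρt are both firing sequences and σtρ ≡₀* σρt. -/
open Relation

/-- `N` is binary-conflict-free: any two distinct transitions individually
enabled at a reachable marking are enabled together as a step. -/
def Net.BinaryConflictFree {S T : Type} (N : Net S T) : Prop :=
  ∀ M, N.Reachable M → ∀ t u : T, t ≠ u →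
    N.Enabled t M → N.Enabled u M → N.Enabled2 t u M

/-
Induct on `ρ`, keeping `t` at the end of the already fired prefix. If `ρ = u :: ρ'`, then `t` and
`u` are distinct and both enabled at the marking `M` reached by `σ`, so binary-conflict-freeness
makes the step `{t, u}` enabled at `M`. Firing `t u` and `u t` from such a marking ends at the
same marking, hence `σ t u ρ'` is a firing sequence adjacent to `σ u t ρ'`, and the induction
hypothesis for the prefix `σ u` moves `t` across `ρ'`.
-/

namespace Net

variable {S T : Type} {N : Net S T} {M M₁ M₂ : S → ℕ} {t u : T} {σ ρ : List T}

theorem Fires.determ (h₁ : N.Fires t M M₁) (h₂ : N.Fires t M M₂) : M₁ = M₂ :=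
  h₁.2.trans h₂.2.symm

theorem Enabled.exists_fires (h : N.Enabled t M) : ∃ M', N.Fires t M M' :=
  ⟨_, h, rfl⟩

theorem firesList_cons_iff :
    N.FiresList M (t :: σ) M₂ ↔ ∃ M₁, N.Fires t M M₁ ∧ N.FiresList M₁ σ M₂ := by
  constructor
  · rintro ⟨⟩
    exact ⟨_, ‹_›, ‹_›⟩
  · rintro ⟨M₁, ht, hσ⟩
    exact .cons ht hσ

theorem FiresList.append (h₁ : N.FiresList M σ M₁) (h₂ : N.FiresList M₁ ρ M₂) :
    N.FiresList M (σ ++ ρ) M₂ := by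
  induction h₁ with
  | nil => exact h₂
  | cons ht _ ih => exact .cons ht (ih h₂)

theorem firesList_append_iff :
    N.FiresList M (σ ++ ρ) M₂ ↔ ∃ M₁, N.FiresList M σ M₁ ∧ N.FiresList M₁ ρ M₂ := by
  refine ⟨fun h => ?_, fun ⟨_, h₁, h₂⟩ => h₁.append h₂⟩
  induction σ generalizing M with
  | nil => exact ⟨M, .nil M, h⟩
  | cons a σ ih =>
    obtain ⟨M', ha, hσρ⟩ := firesList_cons_iff.1 h
    obtain ⟨M₁, hσ, hρ⟩ := ih hσρ
    exact ⟨M₁, .cons ha hσ, hρ⟩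

theorem FiresList.determ (h₁ : N.FiresList M σ M₁) (h₂ : N.FiresList M σ M₂) : M₁ = M₂ := by
  induction h₁ generalizing M₂ with
  | nil => cases h₂; rfl
  | cons ht _ ih =>
    obtain ⟨_, ht', hσ⟩ := firesList_cons_iff.1 h₂
    exact ih (ht.determ ht' ▸ hσ)

theorem Enabled2.left (h : N.Enabled2 t u M) : N.Enabled t M :=
  fun s => (Nat.le_add_right _ _).trans (h s)

theorem Enabled2.fires_comm (h : N.Enabled2 t u M) (ht : N.Fires t M M₁) (hu : N.Fires u M M₂) :
    ∃ M', N.Fires u M₁ M' ∧ N.Fires t M₂ M' := by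
  obtain ⟨-, rfl⟩ := ht
  obtain ⟨-, rfl⟩ := hu
  refine ⟨_, ⟨fun s => ?_, rfl⟩, ⟨fun s => ?_, funext fun s => ?_⟩⟩ <;>
    · have := h s
      dsimp only
      omega

theorem Enabled2.firesList_swap {β : List T} (h : N.Enabled2 t u M)
    (hut : N.FiresList M (u :: t :: β) M₂) : N.FiresList M (t :: u :: β) M₂ := by
  obtain ⟨Mu, hu, Mut, ht, hβ⟩ : ∃ Mu, N.Fires u M Mu ∧ ∃ Mut, N.Fires t Mu Mut ∧
      N.FiresList Mut β M₂ := by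
    simpa only [firesList_cons_iff] using hut
  obtain ⟨Mt, htM⟩ := h.left.exists_fires
  obtain ⟨M', hu', ht'⟩ := h.fires_comm htM hu
  exact .cons htM (.cons hu' (ht'.determ ht ▸ hβ))

theorem adj_of_enabled2 {α β : List T} (hα : N.FiresList N.M0 α M) (h : N.Enabled2 t u M)
    (hut : N.FS (α ++ u :: t :: β)) : N.Adj (α ++ t :: u :: β) (α ++ u :: t :: β) := by
  obtain ⟨M₂, hM₂⟩ := hut
  obtain ⟨M', hα', hrest⟩ := firesList_append_iff.1 hM₂
  cases hα.determ hα'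
  exact ⟨α, β, t, u, M, rfl, rfl, hα, h, ⟨M₂, hα.append (h.firesList_swap hrest)⟩, ⟨M₂, hM₂⟩⟩

theorem FS.exists_fires_of_append_cons (h : N.FS (σ ++ t :: ρ)) :
    ∃ M, N.FiresList N.M0 σ M ∧ ∃ M₁, N.Fires t M M₁ := by
  obtain ⟨M₂, h⟩ := h
  obtain ⟨M, hσ, htρ⟩ := firesList_append_iff.1 h
  obtain ⟨M₁, ht, -⟩ := firesList_cons_iff.1 htρ
  exact ⟨M, hσ, M₁, ht⟩

theorem Adj.fs_left {σ' : List T} (h : N.Adj σ σ') : N.FS σ := by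
  obtain ⟨-, -, -, -, -, -, -, -, -, hσ, -⟩ := h
  exact hσ

end Net

theorem closing_diamond_without {S T : Type} (N : Net S T)
    (hN : N.BinaryConflictFree) (σ ρ : List T) (t : T) (hn : t ∉ ρ)
    (ht : N.FS (σ ++ [t])) (hρ : N.FS (σ ++ ρ)) :
    N.FS (σ ++ t :: ρ) ∧ N.FS (σ ++ ρ ++ [t]) ∧
      Relation.ReflTransGen N.Adj (σ ++ t :: ρ) (σ ++ ρ ++ [t]) := by
  induction ρ generalizing σ with
  | nil => simpa using ⟨ht, Relation.ReflTransGen.refl⟩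
  | cons u ρ ih =>
    obtain ⟨htu, hn⟩ : t ≠ u ∧ t ∉ ρ := by simpa using hn
    obtain ⟨M, hσ, Mt, htM⟩ := ht.exists_fires_of_append_cons
    obtain ⟨M', hσ', Mu, hu⟩ := hρ.exists_fires_of_append_cons
    cases hσ.determ hσ'
    have htu₂ : N.Enabled2 t u M := hN M ⟨σ, hσ⟩ t u htu htM.1 hu.1
    obtain ⟨Mut, -, hut⟩ := htu₂.fires_comm htM hu
    obtain ⟨hσut, hσuρt, hchain⟩ := ih (σ ++ [u]) hn
      ⟨Mut, (hσ.append (.cons hu (.nil _))).append (.cons hut (.nil _))⟩ (by simpa using hρ)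
    simp only [List.append_assoc, List.cons_append, List.nil_append] at hσut hσuρt hchain ⊢
    have hadj := Net.adj_of_enabled2 hσ htu₂ hσut
    exact ⟨hadj.fs_left, hσuρt, .head hadj hchain⟩
end
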